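/- arXiv:2605.15445 — 3 statements merged into one kernel-verified Lean document; each statement's English description precedes it below -/
import Mathlib

section
/- The Robinson polynomial x₃⁶ − x₂⁴x₃² − x₂²x₃⁴ + x₂⁶ − x₁²x₃⁴ + 3x₁²x₂²x₃² − x₁²x₂⁴ − x₁⁴x₃² − x₁⁴x₂² + x₁⁶ is nonnegative for all real x₁, x₂, x₃. -/
theorem schur_aux (a b c : ℝ) (ha : 0 ≤ a) (hb : 0 ≤ b) (hc : 0 ≤ c) :
    0 ≤ a^3+b^3+c^3+3*a*b*c - a^2*b - a^2*c - b^2*a - b^2*c - c^2*a - c^2*b := by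
  rcases le_total a b with h1 | h1 <;> rcases le_total b c with h2 | h2 <;>
    rcases le_total a c with h3 | h3 <;>
    nlinarith [mul_nonneg (mul_nonneg ha hb) hc, sq_nonneg (a-b), sq_nonneg (b-c), sq_nonneg (a-c),
      mul_nonneg (sub_nonneg.2 h1) (sub_nonneg.2 h2), sq_nonneg (a+b-c)]

/-- The Robinson polynomial is nonnegative on all of `ℝ³`. -/
theorem robinson_nonneg (x1 x2 x3 : ℝ) :
    0 ≤ x3^6 - x2^4*x3^2 - x2^2*x3^4 + x2^6 - x1^2*x3^4 + 3*x1^2*x2^2*x3^2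
      - x1^2*x2^4 - x1^4*x3^2 - x1^4*x2^2 + x1^6 := by
  have := schur_aux (x1^2) (x2^2) (x3^2) (sq_nonneg _) (sq_nonneg _) (sq_nonneg _)
  nlinarith [this]
end

section
/- For all real x₁, x₂, x₃: x₁⁴x₂⁴ − x₁⁴x₂²x₃² + x₁⁴x₃⁴ − x₁²x₂⁴x₃² − x₁²x₂²x₃⁴ + x₂⁴x₃⁴ ≥ 0. -/
theorem quartic_sym_nonneg (x1 x2 x3 : ℝ) :
    0 ≤ x1^4*x2^4 - x1^4*x2^2*x3^2 + x1^4*x3^4 - x1^2*x2^4*x3^2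
      - x1^2*x2^2*x3^4 + x2^4*x3^4 := by
  nlinarith [sq_nonneg (x1^2*x2^2 - x2^2*x3^2), sq_nonneg (x1^2*x2^2 - x1^2*x3^2),
    sq_nonneg (x1^2*x3^2 - x2^2*x3^2)]
end

section
/- For all real x₁, x₂, x₃: x₁⁸ − x₁⁴x₂²x₃² − x₁²x₂⁴x₃² − x₁²x₂²x₃⁴ + x₂⁸ + x₃⁸ ≥ 0. -/
theorem canada2002_nonneg (x1 x2 x3 : ℝ) :
    0 ≤ x1^8 - x1^4*x2^2*x3^2 - x1^2*x2^4*x3^2 - x1^2*x2^2*x3^4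
      + x2^8 + x3^8 := by
  nlinarith [sq_nonneg (x1^4 - x2^4), sq_nonneg (x2^4 - x3^4), sq_nonneg (x1^4 - x3^4),
    sq_nonneg (x1^2*x2^2 - x2^2*x3^2), sq_nonneg (x1^2*x2^2 - x1^2*x3^2),
    sq_nonneg (x2^2*x3^2 - x1^2*x3^2), sq_nonneg x1, sq_nonneg x2, sq_nonneg x3,
    sq_nonneg (x1*x2), sq_nonneg (x2*x3), sq_nonneg (x1*x3)]
end
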